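/- arXiv:1112.4174 — 2 statements merged into one kernel-verified Lean document; each statement's English description precedes it below -/
import Mathlib

section
/- (Gleason-type lemma.) Let G be a group and let {1} = H₀ ⊆ H₁ ⊆ ⋯ ⊆ H_k be a nested sequence of subgroups of G (with H₀ the trivial subgroup). Let A be a finite symmetric subset of G (i.e. a ∈ A implies a⁻¹ ∈ A), and for each i set A_i := A² ∩ H_i. Assume that for every i = 0, …, k−1 the subgroup generated by A_{i+1} is NOT contained in the set A_{i+1}·H_i (the set of products a·h with a ∈ A_{i+1}, h ∈ H_i). Then |A⁵| ≥ k·|A|. -/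
open scoped Pointwise

/-!
If `S` is symmetric and `S * S ⊆ S * K` for a subgroup `K`, then `S * K` is stable under
left multiplication by `S`, hence contains `⟨S⟩`. So for each `i < k` there are
`s, t ∈ A_{i+1}` with `z_i := s t ∉ A_{i+1} H_i`, and `z_i ∈ A⁴ ∩ H_{i+1}`.
The `k` translates `z_i⁻¹ A ⊆ A⁵` are pairwise disjoint: if `z_i⁻¹ a = z_j⁻¹ b` with
`j < i`, then `z_i z_j⁻¹ = a b⁻¹ ∈ A_{i+1}` and `z_j ∈ H_i`, so `z_i ∈ A_{i+1} H_i`,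
a contradiction.
-/

/-- A finite subset `A` of a group `G` is a `K`-approximate subgroup if it is
symmetric, contains the identity, and there is a symmetric subset `X ⊆ A·A·A`
with `|X| ≤ K` such that `A·A ⊆ X·A`. -/
def IsApproxSubgroup {G : Type*} [Group G] (K : ℝ) (A : Set G) : Prop :=
  A.Finite ∧ (1 : G) ∈ A ∧ (∀ a ∈ A, a⁻¹ ∈ A) ∧
    ∃ X : Set G, X.Finite ∧ X ⊆ A * A * A ∧ (∀ x ∈ X, x⁻¹ ∈ X) ∧
      (X.ncard : ℝ) ≤ K ∧ A * A ⊆ X * A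

theorem Set.Finite.pow {M : Type*} [Monoid M] {s : Set M} (hs : s.Finite) :
    ∀ n : ℕ, (s ^ n).Finite
  | 0 => by simp
  | n + 1 => by rw [pow_succ]; exact (hs.pow n).mul hs

section Gleason

variable {G : Type*} [Group G]

theorem closure_subset_mul_subgroup_of_mul_self_subset {S : Set G} {K : Subgroup G}
    (hne : S.Nonempty) (hinv : S⁻¹ = S) (hSS : S * S ⊆ S * K) :
    (Subgroup.closure S : Set G) ⊆ S * K := by
  have hSSK : S * (S * (K : Set G)) ⊆ S * K :=
    calc S * (S * (K : Set G)) = S * S * K := (mul_assoc _ _ _).symm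
      _ ⊆ S * K * K := Set.mul_subset_mul_right hSS
      _ = S * K := by rw [mul_assoc, coe_mul_coe]
  have hmul : ∀ x ∈ S, ∀ y ∈ S * (K : Set G), x * y ∈ S * (K : Set G) :=
    fun x hx y hy => hSSK (Set.mul_mem_mul hx hy)
  intro x hx
  induction hx using Subgroup.closure_induction_left with
  | one =>
    obtain ⟨s, hs⟩ := hne
    simpa using hmul s⁻¹ (hinv ▸ Set.inv_mem_inv.2 hs) s ⟨s, hs, 1, K.one_mem, mul_one s⟩
  | mul_left x hx y _ ih => exact hmul x hx y ih
  | inv_mul_cancel x hx y _ ih => exact hmul x⁻¹ (hinv ▸ Set.inv_mem_inv.2 hx) y ih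

theorem exists_mul_notMem_mul_of_not_closure_subset {S : Set G} {K : Subgroup G}
    (hne : S.Nonempty) (hinv : S⁻¹ = S) (h : ¬(Subgroup.closure S : Set G) ⊆ S * K) :
    ∃ s ∈ S, ∃ t ∈ S, s * t ∉ S * (K : Set G) := by
  obtain ⟨_, ⟨s, hs, t, ht, rfl⟩, hst⟩ :=
    Set.not_subset.1 (mt (closure_subset_mul_subgroup_of_mul_self_subset hne hinv) h)
  exact ⟨s, hs, t, ht, hst⟩

theorem disjoint_inv_smul_of_notMem_mul {A : Set G} {L M : Subgroup G} {x y : G}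
    (hLM : L ≤ M) (hx : x ∈ M) (hxL : x ∉ (A * A⁻¹ ∩ M) * L) (hy : y ∈ L) :
    Disjoint (x⁻¹ • A) (y⁻¹ • A) := by
  rw [Set.disjoint_left]
  rintro _ ⟨a, ha, rfl⟩ ⟨b, hb, hab⟩
  simp only [smul_eq_mul] at hab
  rw [eq_comm, inv_mul_eq_iff_eq_mul] at hab
  have hxy : x * y⁻¹ = a * b⁻¹ := by rw [hab]; group
  refine hxL ⟨x * y⁻¹, ⟨?_, M.mul_mem hx (M.inv_mem (hLM hy))⟩, y, hy,
    inv_mul_cancel_right x y⟩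
  rw [hxy]
  exact Set.mul_mem_mul ha (Set.inv_mem_inv.2 hb)

theorem pairwiseDisjoint_inv_smul_of_notMem_mul {A : Set G} {H : ℕ → Subgroup G} {k : ℕ}
    {z : ℕ → G} (hmono : ∀ i < k, H i ≤ H (i + 1)) (hzH : ∀ i < k, z i ∈ H (i + 1))
    (hzS : ∀ i < k, z i ∉ (A * A⁻¹ ∩ H (i + 1)) * H i) :
    (Finset.range k : Set ℕ).PairwiseDisjoint (fun i => (z i)⁻¹ • A) := by
  have hHmono : MonotoneOn H (Set.Iic k) := monotoneOn_of_le_add_one Set.ordConnected_Iic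
    fun i _ _ hi => hmono i (by simpa [Nat.add_one_le_iff] using hi)
  intro i hi j hj hij
  simp only [Finset.coe_range, Set.mem_Iio] at hi hj
  wlog hji : j < i generalizing i j
  · exact (this hij.symm hj hi (by omega)).symm
  exact disjoint_inv_smul_of_notMem_mul (hmono i hi) (hzH i hi) (hzS i hi)
    (hHmono (by simp; omega) (by simp; omega) hji (hzH j hj))

theorem mul_ncard_le_of_pairwiseDisjoint_smul {α : Type*} [MulAction G α] {A B : Set α}
    (hA : A.Finite) (hB : B.Finite) {k : ℕ} {x : ℕ → G}
    (hdisj : (Finset.range k : Set ℕ).PairwiseDisjoint (fun i => x i • A))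
    (hsub : ∀ i < k, x i • A ⊆ B) : k * A.ncard ≤ B.ncard :=
  calc k * A.ncard = (⋃ i ∈ (Finset.range k : Set ℕ), x i • A).ncard := by
        rw [(Finset.range k).finite_toSet.ncard_biUnion (fun i _ => hA.smul_set) hdisj,
          finsum_mem_coe_finset]
        simp [Set.ncard_smul_set]
    _ ≤ B.ncard :=
        Set.ncard_le_ncard (Set.iUnion₂_subset fun i hi => hsub i (by simpa using hi)) hB

end Gleason

theorem stmt_4_general {G : Type*} [Group G] (k : ℕ) (H : ℕ → Subgroup G)
    (hmono : ∀ i, i < k → H i ≤ H (i + 1))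
    (A : Set G) (hfin : A.Finite) (hsym : ∀ a ∈ A, a⁻¹ ∈ A)
    (hgen : ∀ i, i < k →
      ¬ ((Subgroup.closure (A * A ∩ (H (i + 1) : Set G)) : Set G) ⊆
          (A * A ∩ (H (i + 1) : Set G)) * (H i : Set G))) :
    k * A.ncard ≤ (A ^ 5).ncard := by
  rcases A.eq_empty_or_nonempty with rfl | ⟨a, ha⟩
  · simp
  have hAinv : A⁻¹ = A := Set.ext fun b => ⟨fun hb => inv_inv b ▸ hsym _ hb, hsym b⟩
  have hescape : ∀ i < k, ∃ z ∈ A ^ 4, z ∈ H (i + 1) ∧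
      z ∉ (A * A⁻¹ ∩ (H (i + 1) : Set G)) * (H i : Set G) := by
    intro i hi
    have hne : (A * A ∩ (H (i + 1) : Set G)).Nonempty :=
      ⟨1, ⟨a, ha, a⁻¹, hsym a ha, mul_inv_cancel a⟩, (H (i + 1)).one_mem⟩
    have hinv : (A * A ∩ (H (i + 1) : Set G))⁻¹ = A * A ∩ (H (i + 1) : Set G) := by
      simp [Set.inter_inv, mul_inv_rev, hAinv]
    obtain ⟨s, hs, t, ht, hst⟩ :=
      exists_mul_notMem_mul_of_not_closure_subset hne hinv (hgen i hi)
    refine ⟨s * t, ?_, (H (i + 1)).mul_mem hs.2 ht.2, hAinv.symm ▸ hst⟩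
    rw [show 4 = 2 + 2 from rfl, pow_add, sq]
    exact Set.mul_mem_mul hs.1 ht.1
  choose! z hzA hzH hzS using hescape
  refine mul_ncard_le_of_pairwiseDisjoint_smul hfin (hfin.pow 5)
    (pairwiseDisjoint_inv_smul_of_notMem_mul hmono hzH hzS) fun i hi => ?_
  have hzinv := Set.inv_mem_inv.2 (hzA i hi)
  rw [← inv_pow, hAinv] at hzinv
  rw [pow_succ]
  exact Set.smul_set_subset_mul hzinv

/-- Gleason-type lemma: if `{1} = H₀ ⊆ H₁ ⊆ ⋯ ⊆ H_k` are subgroups and the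
subgroup generated by `A_{i+1} := A² ∩ H_{i+1}` is not contained in
`A_{i+1}·H_i` for each `i < k`, then `|A⁵| ≥ k|A|`. -/
theorem stmt_4 {G : Type*} [Group G] (k : ℕ) (H : ℕ → Subgroup G)
    (hH0 : H 0 = ⊥) (hmono : ∀ i, i < k → H i ≤ H (i + 1))
    (A : Set G) (hfin : A.Finite) (hsym : ∀ a ∈ A, a⁻¹ ∈ A)
    (hgen : ∀ i, i < k →
      ¬ ((Subgroup.closure (A * A ∩ (H (i + 1) : Set G)) : Set G) ⊆
          (A * A ∩ (H (i + 1) : Set G)) * (H i : Set G))) :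
    k * A.ncard ≤ (A ^ 5).ncard :=
  stmt_4_general k H hmono A hfin hsym hgen
end

section
/- Let G be a group, let A be a finite nonempty symmetric subset of G (i.e. a ∈ A implies a⁻¹ ∈ A), and let γ ∈ G. Let T = {γ·a·γ⁻¹·a⁻¹ : a ∈ A} be the set of commutators of γ with elements of A. Then |A² ∩ C_G(γ)| · |T| ≥ |A|, where C_G(γ) = {g ∈ G : gγ = γg} is the centralizer of γ in G. -/
open scoped Pointwise

lemma ncard_prod' {α β : Type*} (s : Set α) (t : Set β) :
    (s ×ˢ t).ncard = s.ncard * t.ncard := by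
  rw [← Nat.card_coe_set_eq, ← Nat.card_coe_set_eq, ← Nat.card_coe_set_eq,
    Nat.card_congr (Equiv.Set.prod s t), Nat.card_prod]

/-- Pigeonhole for commutators: if `T` is the set of commutators of `γ` with
elements of `A`, then `|A² ∩ C_G(γ)| · |T| ≥ |A|`. -/
theorem stmt_9 {G : Type*} [Group G] (A : Set G) (hfin : A.Finite)
    (hne : A.Nonempty) (hsym : ∀ a ∈ A, a⁻¹ ∈ A) (γ : G)
    (T : Set G) (hT : T = (fun a => γ * a * γ⁻¹ * a⁻¹) '' A) :
    A.ncard ≤ (A * A ∩ {g : G | g * γ = γ * g}).ncard * T.ncard := by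
  classical
  set c : G → G := fun a => γ * a * γ⁻¹ * a⁻¹ with hc
  have hrep : ∀ t ∈ T, ∃ a ∈ A, c a = t := by
    intro t ht
    rw [hT] at ht
    obtain ⟨a, ha, hat⟩ := ht
    exact ⟨a, ha, hat⟩
  choose! r hrA hrc using hrep
  set S : Set G := A * A ∩ {g : G | g * γ = γ * g} with hS
  set f : G → G × G := fun a => ((r (c a))⁻¹ * a, c a) with hf
  have hcT : ∀ a ∈ A, c a ∈ T := by
    intro a ha; rw [hT]; exact ⟨a, ha, rfl⟩
  -- key: if c b = c a then b⁻¹ * a commutes with γ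
  have hcomm : ∀ a b : G, c b = c a → (b⁻¹ * a) * γ = γ * (b⁻¹ * a) := by
    intro a b h
    simp only [hc] at h
    have h' : b * γ⁻¹ * b⁻¹ = a * γ⁻¹ * a⁻¹ := by
      have := congrArg (fun x => γ⁻¹ * x) h
      simpa [mul_assoc] using this
    have h'' : b * γ * b⁻¹ = a * γ * a⁻¹ := by
      have := congrArg (fun x => x⁻¹) h'
      simpa [mul_assoc] using this
    have : γ * b⁻¹ = b⁻¹ * (a * γ * a⁻¹) := by
      have := congrArg (fun x => b⁻¹ * x) h''
      simpa [mul_assoc] using this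
    have := congrArg (fun x => x * a) this
    simpa [mul_assoc] using this.symm
  have hmaps : Set.MapsTo f A (S ×ˢ T) := by
    intro a ha
    refine ⟨⟨Set.mul_mem_mul (hsym _ (hrA _ (hcT a ha))) ha, ?_⟩, hcT a ha⟩
    exact hcomm a (r (c a)) (hrc _ (hcT a ha))
  have hinj : Set.InjOn f A := by
    intro a ha b hb hab
    have h2 : c a = c b := congrArg Prod.snd hab
    have h1 : (r (c a))⁻¹ * a = (r (c b))⁻¹ * b := congrArg Prod.fst hab
    rw [h2] at h1
    exact mul_left_cancel h1
  have hTfin : T.Finite := by rw [hT]; exact hfin.image _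
  have hSfin : S.Finite := ((hfin.mul hfin).inter_of_left _)
  calc A.ncard ≤ (S ×ˢ T).ncard :=
        Set.ncard_le_ncard_of_injOn f hmaps hinj (hSfin.prod hTfin)
    _ = S.ncard * T.ncard := ncard_prod' S T
end
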